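/- Let X be a locally compact Hausdorff space and σ a local homeomorphism from an open subset U of X onto an open subset V of X, and let G(X,σ) be the associated Deaconu–Renault groupoid. Then the collection of all sets Z(A,m,n,B), where m,n ∈ ℕ₀, A ⊆ U_m and B ⊆ U_n are open and σᵐ|_A and σⁿ|_B are homeomorphisms onto their (open) images, is a basis for a topology on G(X,σ): these sets cover G(X,σ), and for any two such sets Z₁, Z₂ and any η ∈ Z₁ ∩ Z₂ there is a set Z₃ of this form with η ∈ Z₃ ⊆ Z₁ ∩ Z₂. Moreover, with respect to the topology generated by these sets, the inversion map (x,k,y) ↦ (y,−k,x) is a homeomorphism of G(X,σ), and the range map r(x,k,y) = x is a local homeomorphism from G(X,σ) onto X. -/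

import Mathlib

open Set Function

/-- The domain `Uₙ` of the `n`-th iterate of a local homeomorphism `σ` from an open
set `U ⊆ X` onto an open set `V ⊆ X`: `U₀ = X` and `Uₙ₊₁ = σ⁻¹(Uₙ ∩ V)` (inside `U`). -/
def iterDom {X : Type*} (σ : X → X) (U V : Set X) : ℕ → Set X
  | 0 => Set.univ
  | n + 1 => U ∩ σ ⁻¹' (iterDom σ U V n ∩ V)

/-- `Stab(x) = {m - n : x ∈ U_m ∩ U_n, σᵐ(x) = σⁿ(x)} ⊆ ℤ`. -/
def DRStab {X : Type*} (σ : X → X) (U V : Set X) (x : X) : Set ℤ :=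
  {p | ∃ m n : ℕ, p = (m : ℤ) - (n : ℤ) ∧
    x ∈ iterDom σ U V m ∩ iterDom σ U V n ∧ σ^[m] x = σ^[n] x}

/-- `Stab^ess(x)`: those `m - n` for which `σᵐ = σⁿ` on a neighbourhood of `x`. -/
def DRStabEss {X : Type*} [TopologicalSpace X] (σ : X → X) (U V : Set X) (x : X) : Set ℤ :=
  {p | ∃ m n : ℕ, p = (m : ℤ) - (n : ℤ) ∧
    ∃ O : Set X, IsOpen O ∧ x ∈ O ∧ O ⊆ iterDom σ U V m ∩ iterDom σ U V n ∧
      Set.EqOn (σ^[m]) (σ^[n]) O}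

/-- `Stab_min(x) := min {p ∈ Stab(x) : p ≥ 1}` in `ℕ∞` (`min ∅ = ∞`). -/
noncomputable def DRStabMin {X : Type*} (σ : X → X) (U V : Set X) (x : X) : ℕ∞ :=
  sInf {p : ℕ∞ | ∃ q : ℕ, p = (q : ℕ∞) ∧ 1 ≤ q ∧ (q : ℤ) ∈ DRStab σ U V x}

/-- `Stab^ess_min(x) := min {p ∈ Stab^ess(x) : p ≥ 1}` in `ℕ∞`. -/
noncomputable def DRStabEssMin {X : Type*} [TopologicalSpace X] (σ : X → X) (U V : Set X)
    (x : X) : ℕ∞ :=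
  sInf {p : ℕ∞ | ∃ q : ℕ, p = (q : ℕ∞) ∧ 1 ≤ q ∧ (q : ℤ) ∈ DRStabEss σ U V x}

/-- `(h, l, k, l', k')` is a continuous orbit equivalence from `(X, σ)` to `(Y, τ)`. -/
def DRCOE {X Y : Type*} [TopologicalSpace X] [TopologicalSpace Y]
    (σ : X → X) (Uσ : Set X) (τ : Y → Y) (Uτ : Set Y)
    (h : X ≃ₜ Y) (l k : X → ℕ) (l' k' : Y → ℕ) : Prop :=
  ContinuousOn l Uσ ∧ ContinuousOn k Uσ ∧ ContinuousOn l' Uτ ∧ ContinuousOn k' Uτ ∧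
    (∀ x ∈ Uσ, τ^[l x] (h x) = τ^[k x] (h (σ x))) ∧
    (∀ y ∈ Uτ, σ^[l' y] (h.symm y) = σ^[k' y] (h.symm (τ y)))

/-- The continuous orbit equivalence `(h, l, k, l', k')` preserves stabilisers. -/
def DRPreservesStab {X Y : Type*} [TopologicalSpace X] [TopologicalSpace Y]
    (σ : X → X) (Uσ Vσ : Set X) (τ : Y → Y) (Uτ Vτ : Set Y)
    (h : X ≃ₜ Y) (l k : X → ℕ) (l' k' : Y → ℕ) : Prop :=
  (∀ x : X, DRStabMin σ Uσ Vσ x < ⊤ ↔ DRStabMin τ Uτ Vτ (h x) < ⊤) ∧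
  (∀ (x : X) (p : ℕ), 1 ≤ p → (p : ℕ∞) = DRStabMin σ Uσ Vσ x → σ^[p] x = x →
    (((∑ j ∈ Finset.range p, ((l (σ^[j] x) : ℤ) - (k (σ^[j] x) : ℤ))).natAbs : ℕ∞)
      = DRStabMin τ Uτ Vτ (h x))) ∧
  (∀ (y : Y) (p : ℕ), 1 ≤ p → (p : ℕ∞) = DRStabMin τ Uτ Vτ y → τ^[p] y = y →
    (((∑ j ∈ Finset.range p, ((l' (τ^[j] y) : ℤ) - (k' (τ^[j] y) : ℤ))).natAbs : ℕ∞)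
      = DRStabMin σ Uσ Vσ (h.symm y)))

/-- The continuous orbit equivalence `(h, l, k, l', k')` preserves essential stabilisers. -/
def DRPreservesStabEss {X Y : Type*} [TopologicalSpace X] [TopologicalSpace Y]
    (σ : X → X) (Uσ Vσ : Set X) (τ : Y → Y) (Uτ Vτ : Set Y)
    (h : X ≃ₜ Y) (l k : X → ℕ) (l' k' : Y → ℕ) : Prop :=
  (∀ x : X, DRStabEssMin σ Uσ Vσ x < ⊤ ↔ DRStabEssMin τ Uτ Vτ (h x) < ⊤) ∧
  (∀ (x : X) (p : ℕ), 1 ≤ p → (p : ℕ∞) = DRStabEssMin σ Uσ Vσ x → σ^[p] x = x →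
    (((∑ j ∈ Finset.range p, ((l (σ^[j] x) : ℤ) - (k (σ^[j] x) : ℤ))).natAbs : ℕ∞)
      = DRStabEssMin τ Uτ Vτ (h x))) ∧
  (∀ (y : Y) (p : ℕ), 1 ≤ p → (p : ℕ∞) = DRStabEssMin τ Uτ Vτ y → τ^[p] y = y →
    (((∑ j ∈ Finset.range p, ((l' (τ^[j] y) : ℤ) - (k' (τ^[j] y) : ℤ))).natAbs : ℕ∞)
      = DRStabEssMin σ Uσ Vσ (h.symm y)))

/-- The Deaconu–Renault groupoid `G(X,σ)` as a subset of `X × ℤ × X`. -/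
def DRset {X : Type*} (σ : X → X) (U V : Set X) : Set (X × ℤ × X) :=
  {p | ∃ m n : ℕ, p.2.1 = (m : ℤ) - (n : ℤ) ∧
    p.1 ∈ iterDom σ U V m ∧ p.2.2 ∈ iterDom σ U V n ∧ σ^[m] p.1 = σ^[n] p.2.2}

/-- `f` restricts to a homeomorphism of `A` onto its (open) image. -/
def HomeoOnto {X : Type*} [TopologicalSpace X] (f : X → X) (A : Set X) : Prop :=
  ∃ e : PartialHomeomorph X X, e.source = A ∧ e.target = f '' A ∧ Set.EqOn f e A

/-- The basic sets `Z(A, m, n, B)` of the Deaconu–Renault groupoid. -/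
def DRbasic {X : Type*} [TopologicalSpace X] (σ : X → X) (U V : Set X) :
    Set (Set ↥(DRset σ U V)) :=
  {S | ∃ (m n : ℕ) (A B : Set X), IsOpen A ∧ IsOpen B ∧
    A ⊆ iterDom σ U V m ∧ B ⊆ iterDom σ U V n ∧
    HomeoOnto (σ^[m]) A ∧ HomeoOnto (σ^[n]) B ∧
    S = {g : ↥(DRset σ U V) | g.1.1 ∈ A ∧ g.1.2.2 ∈ B ∧
      g.1.2.1 = (m : ℤ) - (n : ℤ) ∧ σ^[m] g.1.1 = σ^[n] g.1.2.2}}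

/-- The topology on `G(X,σ)` generated by the sets `Z(A,m,n,B)`. -/
def DRtop {X : Type*} [TopologicalSpace X] (σ : X → X) (U V : Set X) :
    TopologicalSpace ↥(DRset σ U V) :=
  TopologicalSpace.generateFrom (DRbasic σ U V)

/-- The inversion map `(x, k, y) ↦ (y, -k, x)` of `G(X,σ)`. -/
def DRinv {X : Type*} (σ : X → X) (U V : Set X) : ↥(DRset σ U V) → ↥(DRset σ U V) :=
  fun g => ⟨(g.1.2.2, -g.1.2.1, g.1.1), by
    obtain ⟨m, n, h1, h2, h3, h4⟩ := g.2
    exact ⟨n, m, by rw [h1]; ring, h3, h2, h4.symm⟩⟩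

/-!
On a basic set `Z(A,m,n,B)` the range map is injective, because `σⁿ` is injective on `B`, and its
image `A ∩ σ⁻ᵐ(σⁿ(B))` is open, because local homeomorphisms are open maps. As the range map is
also continuous, it is a local homeomorphism once the sets `Z(A,m,n,B)` form a basis.

For the basis property, let `(x,k,y)` lie in `Z(A₁,m₁,n₁,B₁) ∩ Z(A₂,m₂,n₂,B₂)` with `m₁ ≤ m₂`.
Then `t := m₂ - m₁ = n₂ - n₁`, and after shrinking `A₁ ∩ A₂` and `B₁ ∩ B₂` so that `σ^{m₁}`
and `σ^{n₁}` map them into a neighbourhood of `σ^{m₁}x` on which `σᵗ` is injective, the equation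
`σ^{m₂}x' = σ^{n₂}y'` forces `σ^{m₁}x' = σ^{n₁}y'`.

Inversion maps `Z(A,m,n,B)` onto `Z(B,n,m,A)`, so it is a continuous involution.
-/

open TopologicalSpace Filter

section Iterates

variable {X : Type*} {σ : X → X} {U V : Set X}

lemma mem_iterDom_add {m t : ℕ} {x : X} (hx : x ∈ iterDom σ U V (m + t)) :
    x ∈ iterDom σ U V m ∧ σ^[m] x ∈ iterDom σ U V t := by
  induction m generalizing x with
  | zero => exact ⟨trivial, by simpa using hx⟩
  | succ m ih =>
    rw [Nat.succ_add] at hx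
    obtain ⟨hxU, hσx, hσxV⟩ := hx
    obtain ⟨hσxm, hσxt⟩ := ih hσx
    exact ⟨⟨hxU, hσxm, hσxV⟩, hσxt⟩

variable [TopologicalSpace X]

lemma isOpen_iterDom (hσ : ContinuousOn σ U) (hU : IsOpen U) (hV : IsOpen V) :
    ∀ n, IsOpen (iterDom σ U V n)
  | 0 => isOpen_univ
  | n + 1 => hσ.isOpen_inter_preimage hU ((isOpen_iterDom hσ hU hV n).inter hV)

lemma isLocalHomeomorphOn_iterate_iterDom (hσ : IsLocalHomeomorphOn σ U) :
    ∀ n, IsLocalHomeomorphOn σ^[n] (iterDom σ U V n)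
  | 0 => (Homeomorph.refl X).isLocalHomeomorph.isLocalHomeomorphOn
  | n + 1 => by
    rw [iterate_succ]
    exact (isLocalHomeomorphOn_iterate_iterDom hσ n).comp (hσ.mono fun _ hx => hx.1)
      fun _ hx => hx.2.1

end Iterates

section LocalHomeomorphisms

variable {X : Type*} [TopologicalSpace X] {f : X → X} {s N : Set X}

lemma HomeoOnto.injOn (h : HomeoOnto f s) : InjOn f s := by
  obtain ⟨e, rfl, -, hfe⟩ := h
  exact hfe.injOn_iff.2 e.toPartialEquiv.injOn

lemma IsLocalHomeomorphOn.isOpen_image (hf : IsLocalHomeomorphOn f s) (hN : IsOpen N)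
    (hNs : N ⊆ s) : IsOpen (f '' N) := by
  refine isOpen_iff_mem_nhds.2 ?_
  rintro _ ⟨x, hx, rfl⟩
  rw [← hf.map_nhds_eq (hNs hx)]
  exact image_mem_map (hN.mem_nhds hx)

lemma IsLocalHomeomorphOn.exists_homeoOnto_subset (hf : IsLocalHomeomorphOn f s)
    (hN : IsOpen N) (hNs : N ⊆ s) {x : X} (hx : x ∈ N) :
    ∃ A ⊆ N, IsOpen A ∧ x ∈ A ∧ HomeoOnto f A := by
  obtain ⟨e, hxe, rfl⟩ := hf x (hNs hx)
  exact ⟨e.source ∩ N, inter_subset_right, e.open_source.inter hN, ⟨hxe, hx⟩,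
    (e.restrOpen N hN).toPartialHomeomorph, rfl, (e.image_source_inter_eq' N).symm, eqOn_refl _ _⟩

end LocalHomeomorphisms

section Groupoid

variable {X : Type*} {σ : X → X} {U V : Set X}

variable (σ U V) in
def DRZ (m n : ℕ) (A B : Set X) : Set ↥(DRset σ U V) :=
  {g | g.1.1 ∈ A ∧ g.1.2.2 ∈ B ∧ g.1.2.1 = (m : ℤ) - (n : ℤ) ∧ σ^[m] g.1.1 = σ^[n] g.1.2.2}

lemma image_fst_DRZ {m n : ℕ} {A B : Set X} (hAm : A ⊆ iterDom σ U V m)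
    (hBn : B ⊆ iterDom σ U V n) :
    (fun g : ↥(DRset σ U V) => g.1.1) '' DRZ σ U V m n A B = A ∩ σ^[m] ⁻¹' (σ^[n] '' B) := by
  ext x
  constructor
  · rintro ⟨g, ⟨hxA, hyB, -, hσxy⟩, rfl⟩
    exact ⟨hxA, _, hyB, hσxy.symm⟩
  · rintro ⟨hxA, y, hyB, hσxy⟩
    exact ⟨⟨(x, (m : ℤ) - n, y), m, n, rfl, hAm hxA, hBn hyB, hσxy.symm⟩,
      ⟨hxA, hyB, rfl, hσxy.symm⟩, rfl⟩

lemma involutive_DRinv : Involutive (DRinv σ U V) := fun _ =>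
  Subtype.ext <| Prod.ext rfl <| Prod.ext (neg_neg _) rfl

lemma preimage_DRinv_DRZ (m n : ℕ) (A B : Set X) :
    DRinv σ U V ⁻¹' DRZ σ U V m n A B = DRZ σ U V n m B A := by
  ext g
  constructor
  · rintro ⟨h₁, h₂, h₃ : -g.1.2.1 = _, h₄⟩
    exact ⟨h₂, h₁, by omega, h₄.symm⟩
  · rintro ⟨h₁, h₂, h₃, h₄⟩
    exact ⟨h₂, h₁, show -g.1.2.1 = _ by omega, h₄.symm⟩

end Groupoid

section DeaconuRenault

variable {X : Type*} [TopologicalSpace X] {σ : X → X} {U V : Set X}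

variable (σ U V) in
/-- `A` is one of the sets admitted in `Z(A, m, ·, ·)` and `Z(·, ·, m, A)`. -/
def IsIterateChart (m : ℕ) (A : Set X) : Prop :=
  IsOpen A ∧ A ⊆ iterDom σ U V m ∧ HomeoOnto (σ^[m]) A

lemma mem_DRbasic_iff {S : Set ↥(DRset σ U V)} :
    S ∈ DRbasic σ U V ↔ ∃ (m n : ℕ) (A B : Set X),
      IsIterateChart σ U V m A ∧ IsIterateChart σ U V n B ∧ S = DRZ σ U V m n A B := by
  constructor
  · rintro ⟨m, n, A, B, hA, hB, hAU, hBU, hAh, hBh, rfl⟩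
    exact ⟨m, n, A, B, ⟨hA, hAU, hAh⟩, ⟨hB, hBU, hBh⟩, rfl⟩
  · rintro ⟨m, n, A, B, ⟨hA, hAU, hAh⟩, ⟨hB, hBU, hBh⟩, rfl⟩
    exact ⟨m, n, A, B, hA, hB, hAU, hBU, hAh, hBh, rfl⟩

lemma DRZ_mem_DRbasic {m n : ℕ} {A B : Set X} (hA : IsIterateChart σ U V m A)
    (hB : IsIterateChart σ U V n B) : DRZ σ U V m n A B ∈ DRbasic σ U V :=
  mem_DRbasic_iff.2 ⟨m, n, A, B, hA, hB, rfl⟩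

lemma exists_isIterateChart_subset (hσ : IsLocalHomeomorphOn σ U) (hU : IsOpen U)
    (hV : IsOpen V) {m : ℕ} {N : Set X} (hN : IsOpen N) {x : X} (hxm : x ∈ iterDom σ U V m)
    (hxN : x ∈ N) : ∃ A ⊆ N, x ∈ A ∧ IsIterateChart σ U V m A := by
  obtain ⟨A, hAN, hA, hxA, hAh⟩ :=
    (isLocalHomeomorphOn_iterate_iterDom hσ m).exists_homeoOnto_subset
      (hN.inter (isOpen_iterDom hσ.continuousOn hU hV m)) inter_subset_right ⟨hxN, hxm⟩
  exact ⟨A, hAN.trans inter_subset_left, hxA, hA, hAN.trans inter_subset_right, hAh⟩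

lemma exists_DRbasic_mem_subset (hσ : IsLocalHomeomorphOn σ U) (hU : IsOpen U) (hV : IsOpen V)
    (g : ↥(DRset σ U V)) {W : Set X} (hW : IsOpen W) (hgW : g.1.1 ∈ W) :
    ∃ S ∈ DRbasic σ U V, g ∈ S ∧ S ⊆ {h | h.1.1 ∈ W} := by
  obtain ⟨m, n, hk, hm, hn, hσmn⟩ := g.2
  obtain ⟨A, hAW, hxA, hA⟩ := exists_isIterateChart_subset hσ hU hV hW hm hgW
  obtain ⟨B, -, hyB, hB⟩ := exists_isIterateChart_subset hσ hU hV isOpen_univ hn trivial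
  exact ⟨_, DRZ_mem_DRbasic hA hB, ⟨hxA, hyB, hk, hσmn⟩, fun h hh => hAW hh.1⟩

lemma exists_mem_DRbasic (hσ : IsLocalHomeomorphOn σ U) (hU : IsOpen U) (hV : IsOpen V)
    (g : ↥(DRset σ U V)) : ∃ S ∈ DRbasic σ U V, g ∈ S :=
  let ⟨S, hS, hgS, _⟩ := exists_DRbasic_mem_subset hσ hU hV g isOpen_univ trivial
  ⟨S, hS, hgS⟩

lemma exists_DRbasic_mem_subset_inter (hσ : IsLocalHomeomorphOn σ U) (hU : IsOpen U) (hV : IsOpen V) :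
    ∀ S₁ ∈ DRbasic σ U V, ∀ S₂ ∈ DRbasic σ U V, ∀ g ∈ S₁ ∩ S₂,
      ∃ S₃ ∈ DRbasic σ U V, g ∈ S₃ ∧ S₃ ⊆ S₁ ∩ S₂ := by
  intro S₁ hS₁ S₂ hS₂ g hg
  obtain ⟨m₁, n₁, A₁, B₁, hA₁, hB₁, rfl⟩ := mem_DRbasic_iff.1 hS₁
  obtain ⟨m₂, n₂, A₂, B₂, hA₂, hB₂, rfl⟩ := mem_DRbasic_iff.1 hS₂
  clear hS₁ hS₂
  wlog hm : m₁ ≤ m₂ generalizing m₁ n₁ A₁ B₁ m₂ n₂ A₂ B₂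
  · obtain ⟨S₃, hS₃, hgS₃, hS₃sub⟩ := this m₂ n₂ A₂ B₂ hA₂ hB₂ m₁ n₁ A₁ B₁ hA₁ hB₁
      hg.symm (by omega)
    exact ⟨S₃, hS₃, hgS₃, hS₃sub.trans (inter_comm _ _).subset⟩
  obtain ⟨t, rfl⟩ := Nat.exists_eq_add_of_le hm
  obtain ⟨⟨hxA₁, hyB₁, hk₁, hσ₁⟩, ⟨hxA₂, hyB₂, hk₂, hσ₂⟩⟩ := hg
  obtain rfl : n₂ = n₁ + t := by omega
  obtain ⟨C, -, hxC, hCo, -, hCh⟩ := exists_isIterateChart_subset hσ hU hV isOpen_univ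
    (mem_iterDom_add (hA₂.2.1 hxA₂)).2 trivial
  have hcont (n : ℕ) := (isLocalHomeomorphOn_iterate_iterDom (V := V) hσ n).continuousOn
  have hopen := isOpen_iterDom hσ.continuousOn hU hV
  obtain ⟨A₃, hA₃sub, hxA₃, hA₃⟩ := exists_isIterateChart_subset hσ hU hV
    ((hA₁.1.inter hA₂.1).inter ((hcont m₁).isOpen_inter_preimage (hopen m₁) hCo))
    (hA₂.2.1 hxA₂) ⟨⟨hxA₁, hxA₂⟩, hA₁.2.1 hxA₁, hxC⟩
  obtain ⟨B₃, hB₃sub, hyB₃, hB₃⟩ := exists_isIterateChart_subset hσ hU hV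
    ((hB₁.1.inter hB₂.1).inter ((hcont n₁).isOpen_inter_preimage (hopen n₁) hCo))
    (hB₂.2.1 hyB₂) ⟨⟨hyB₁, hyB₂⟩, hB₁.2.1 hyB₁, by rwa [mem_preimage, ← hσ₁]⟩
  refine ⟨_, DRZ_mem_DRbasic hA₃ hB₃, ⟨hxA₃, hyB₃, hk₂, hσ₂⟩, ?_⟩
  rintro h ⟨hx'A₃, hy'B₃, hk', hσ'⟩
  obtain ⟨⟨hx'A₁, hx'A₂⟩, -, hx'C⟩ := hA₃sub hx'A₃
  obtain ⟨⟨hy'B₁, hy'B₂⟩, -, hy'C⟩ := hB₃sub hy'B₃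
  refine ⟨⟨hx'A₁, hy'B₁, by omega, hCh.injOn hx'C hy'C ?_⟩, hx'A₂, hy'B₂, hk', hσ'⟩
  rwa [← iterate_add_apply, ← iterate_add_apply, add_comm t, add_comm t]

lemma injOn_fst_DRZ {m n : ℕ} {A B : Set X} (hB : HomeoOnto (σ^[n]) B) :
    InjOn (fun g : ↥(DRset σ U V) => g.1.1) (DRZ σ U V m n A B) := by
  rintro g ⟨-, hyB, hk, hσxy⟩ g' ⟨-, hy'B, hk', hσxy'⟩ (hx : g.1.1 = g'.1.1)
  have hy : g.1.2.2 = g'.1.2.2 := hB.injOn hyB hy'B (by rw [← hσxy, ← hσxy', hx])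
  exact Subtype.ext (Prod.ext hx (Prod.ext (hk.trans hk'.symm) hy))

section Topology

attribute [local instance] DRtop

lemma isTopologicalBasis_DRbasic (hσ : IsLocalHomeomorphOn σ U) (hU : IsOpen U)
    (hV : IsOpen V) :
    IsTopologicalBasis (DRbasic σ U V) :=
  .mk (exists_DRbasic_mem_subset_inter hσ hU hV)
    (sUnion_eq_univ_iff.2 (exists_mem_DRbasic hσ hU hV)) rfl

lemma continuous_fst_DRset (hσ : IsLocalHomeomorphOn σ U) (hU : IsOpen U) (hV : IsOpen V) :
    Continuous fun g : ↥(DRset σ U V) => g.1.1 := by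
  refine continuous_def.2 fun W hW => isOpen_iff_forall_mem_open.2 fun g hgW => ?_
  obtain ⟨S, hS, hgS, hSW⟩ := exists_DRbasic_mem_subset hσ hU hV g hW hgW
  exact ⟨S, hSW, isOpen_generateFrom_of_mem hS, hgS⟩

lemma isOpenMap_fst_DRset (hσ : IsLocalHomeomorphOn σ U) (hU : IsOpen U) (hV : IsOpen V) :
    IsOpenMap fun g : ↥(DRset σ U V) => g.1.1 := by
  refine (isTopologicalBasis_DRbasic hσ hU hV).isOpenMap_iff.2 fun S hS => ?_
  obtain ⟨m, n, A, B, ⟨hA, hAm, -⟩, ⟨hB, hBn, -⟩, rfl⟩ := mem_DRbasic_iff.1 hS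
  rw [image_fst_DRZ hAm hBn]
  exact ((isLocalHomeomorphOn_iterate_iterDom hσ m).continuousOn.mono hAm).isOpen_inter_preimage
    hA ((isLocalHomeomorphOn_iterate_iterDom hσ n).isOpen_image hB hBn)

lemma isLocalHomeomorph_fst_DRset (hσ : IsLocalHomeomorphOn σ U) (hU : IsOpen U)
    (hV : IsOpen V) : IsLocalHomeomorph fun g : ↥(DRset σ U V) => g.1.1 := by
  refine isLocalHomeomorph_iff_isOpenEmbedding_restrict.2 fun g => ?_
  obtain ⟨S, hS, hgS⟩ := exists_mem_DRbasic hσ hU hV g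
  have hSopen : IsOpen S := isOpen_generateFrom_of_mem hS
  obtain ⟨m, n, A, B, -, ⟨-, -, hBh⟩, rfl⟩ := mem_DRbasic_iff.1 hS
  exact ⟨_, hSopen.mem_nhds hgS, .of_continuous_injective_isOpenMap
    ((continuous_fst_DRset hσ hU hV).comp continuous_subtype_val) (injOn_fst_DRZ hBh).injective
    ((isOpenMap_fst_DRset hσ hU hV).comp hSopen.isOpenMap_subtype_val)⟩

lemma continuous_DRinv : Continuous (DRinv σ U V) := by
  refine continuous_generateFrom_iff.2 fun S hS => ?_
  obtain ⟨m, n, A, B, hA, hB, rfl⟩ := mem_DRbasic_iff.1 hS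
  rw [preimage_DRinv_DRZ]
  exact isOpen_generateFrom_of_mem (DRZ_mem_DRbasic hB hA)

end Topology

end DeaconuRenault

theorem stmt18_general {X : Type*} [TopologicalSpace X]
    (σ : X → X) (U V : Set X)
    (hU : IsOpen U) (hV : IsOpen V) (hσ : IsLocalHomeomorphOn σ U) :
    -- the sets Z(A,m,n,B) cover G(X,σ)
    (∀ g : ↥(DRset σ U V), ∃ S ∈ DRbasic σ U V, g ∈ S) ∧
    -- and are closed under refinement at points of intersections
    (∀ S₁ ∈ DRbasic σ U V, ∀ S₂ ∈ DRbasic σ U V, ∀ g ∈ S₁ ∩ S₂,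
      ∃ S₃ ∈ DRbasic σ U V, g ∈ S₃ ∧ S₃ ⊆ S₁ ∩ S₂) ∧
    -- inversion is a homeomorphism for the generated topology
    (∃ e : @Homeomorph ↥(DRset σ U V) ↥(DRset σ U V) (DRtop σ U V) (DRtop σ U V),
      ∀ g, (@Homeomorph.toEquiv _ _ (DRtop σ U V) (DRtop σ U V) e) g = DRinv σ U V g) ∧
    -- the range map is a local homeomorphism onto X
    Function.Surjective (fun g : ↥(DRset σ U V) => g.1.1) ∧
    @IsLocalHomeomorph ↥(DRset σ U V) X (DRtop σ U V) _ (fun g => g.1.1) := by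
  refine ⟨exists_mem_DRbasic hσ hU hV, exists_DRbasic_mem_subset_inter hσ hU hV,
    ⟨@Homeomorph.mk _ _ (DRtop σ U V) (DRtop σ U V) (involutive_DRinv.toPerm _)
      continuous_DRinv continuous_DRinv, fun _ => rfl⟩,
    fun x => ⟨⟨(x, 0, x), 0, 0, rfl, trivial, trivial, rfl⟩, rfl⟩,
    isLocalHomeomorph_fst_DRset hσ hU hV⟩

theorem stmt18 {X : Type*} [TopologicalSpace X] [LocallyCompactSpace X] [T2Space X]
    (σ : X → X) (U V : Set X)
    (hU : IsOpen U) (hV : IsOpen V) (hσ : IsLocalHomeomorphOn σ U) (hσV : σ '' U = V) :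
    -- the sets Z(A,m,n,B) cover G(X,σ)
    (∀ g : ↥(DRset σ U V), ∃ S ∈ DRbasic σ U V, g ∈ S) ∧
    -- and are closed under refinement at points of intersections
    (∀ S₁ ∈ DRbasic σ U V, ∀ S₂ ∈ DRbasic σ U V, ∀ g ∈ S₁ ∩ S₂,
      ∃ S₃ ∈ DRbasic σ U V, g ∈ S₃ ∧ S₃ ⊆ S₁ ∩ S₂) ∧
    -- inversion is a homeomorphism for the generated topology
    (∃ e : @Homeomorph ↥(DRset σ U V) ↥(DRset σ U V) (DRtop σ U V) (DRtop σ U V),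
      ∀ g, (@Homeomorph.toEquiv _ _ (DRtop σ U V) (DRtop σ U V) e) g = DRinv σ U V g) ∧
    -- the range map is a local homeomorphism onto X
    Function.Surjective (fun g : ↥(DRset σ U V) => g.1.1) ∧
    @IsLocalHomeomorph ↥(DRset σ U V) X (DRtop σ U V) _ (fun g => g.1.1) :=
  stmt18_general σ U V hU hV hσ
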